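/- arXiv:1811.03235 — 7 statements merged into one kernel-verified Lean document; each statement's English description precedes it below -/
import Mathlib

section
/- Let p be a prime, n ≥ 1 a natural number, k = pⁿ, and ω = exp(2πi/k). If q_0, q_1, …, q_{k−1} are nonnegative integers satisfying Σ_{j=0}^{k−1} q_j ω^j = 0, then Σ_{j=0}^{k−1} q_j ≡ 0 (mod p). -/
/-!
The vanishing sum says that `ω` is a root of `f = ∑ q_j X^j ∈ ℤ[X]`. Since `Φ_{pⁿ}` is the minimal
polynomial of `ω` over `ℤ`, it divides `f`, so `f(1) = ∑ q_j` is a multiple of `Φ_{pⁿ}(1)`, which is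
`p` (or `0` when `n = 0`).
-/

open Finset Polynomial

theorem Polynomial.cyclotomic_dvd_of_aeval_eq_zero {K : Type*} [Field K] [CharZero K] {ζ : K}
    {k : ℕ} (hζ : IsPrimitiveRoot ζ k) (hk : 0 < k) {f : ℤ[X]} (hf : aeval ζ f = 0) :
    cyclotomic k ℤ ∣ f := by
  rw [cyclotomic_eq_minpoly hζ hk]
  exact minpoly.isIntegrallyClosed_dvd (hζ.isIntegral hk) hf

theorem Polynomial.prime_dvd_eval_one_cyclotomic_prime_pow {R : Type*} [CommRing R] {p : ℕ}
    (hp : p.Prime) (n : ℕ) : (p : R) ∣ (cyclotomic (p ^ n) R).eval 1 := by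
  cases n with
  | zero => simp
  | succ m =>
    have : Fact p.Prime := ⟨hp⟩
    rw [eval_one_cyclotomic_prime_pow]

theorem IsPrimitiveRoot.prime_dvd_sum_of_sum_mul_pow_eq_zero {K : Type*} [Field K] [CharZero K]
    {p n : ℕ} (hp : p.Prime) {ζ : K} (hζ : IsPrimitiveRoot ζ (p ^ n)) {ι : Type*} (s : Finset ι)
    (a : ι → ℤ) (e : ι → ℕ) (h : ∑ i ∈ s, (a i : K) * ζ ^ e i = 0) :
    (p : ℤ) ∣ ∑ i ∈ s, a i := by
  set f : ℤ[X] := ∑ i ∈ s, C (a i) * X ^ e i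
  have hf : aeval ζ f = 0 := by simpa [f] using h
  obtain ⟨g, hg⟩ := cyclotomic_dvd_of_aeval_eq_zero hζ (pow_pos hp.pos n) hf
  have hf1 : f.eval 1 = ∑ i ∈ s, a i := by simp [f, eval_finsetSum]
  rw [← hf1, hg, eval_mul]
  exact (prime_dvd_eval_one_cyclotomic_prime_pow hp n).mul_right _

theorem sum_coeff_dvd_of_root_sum_zero_general (p : ℕ) (hp : p.Prime) (n : ℕ)
    (k : ℕ) (hk : k = p ^ n)
    (ω : ℂ) (hω : ω = Complex.exp (2 * Real.pi * Complex.I / k))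
    (q : Fin k → ℕ)
    (hsum : ∑ j : Fin k, (q j : ℂ) * ω ^ (j : ℕ) = 0) :
    (∑ j : Fin k, q j) % p = 0 := by
  subst hk hω
  have hζ := Complex.isPrimitiveRoot_exp (p ^ n) (pow_ne_zero n hp.ne_zero)
  have hdvd := hζ.prime_dvd_sum_of_sum_mul_pow_eq_zero hp univ (fun j ↦ (q j : ℤ)) (↑) <| by
    simpa using hsum
  exact Nat.mod_eq_zero_of_dvd (by exact_mod_cast hdvd)

/-- Let `p` be prime, `n ≥ 1`, `k = pⁿ`, `ω = exp(2πi/k)`.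
If nonnegative integers `q_0, …, q_{k-1}` satisfy `Σ q_j ω^j = 0`, then
`Σ q_j ≡ 0 (mod p)`. -/
theorem sum_coeff_dvd_of_root_sum_zero (p : ℕ) (hp : p.Prime) (n : ℕ) (hn : 1 ≤ n)
    (k : ℕ) (hk : k = p ^ n)
    (ω : ℂ) (hω : ω = Complex.exp (2 * Real.pi * Complex.I / k))
    (q : Fin k → ℕ)
    (hsum : ∑ j : Fin k, (q j : ℂ) * ω ^ (j : ℕ) = 0) :
    (∑ j : Fin k, q j) % p = 0 :=
  sum_coeff_dvd_of_root_sum_zero_general p hp n k hk ω hω q hsum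
end

section
/- Let p be a prime, n ≥ 1 a natural number, k = pⁿ, and ω = exp(2πi/k). If q_0, q_1, …, q_{k−1} are nonnegative integers and s ≥ 1 is an integer such that Σ_{j=0}^{k−1} q_j ω^j = k^s, then Σ_{j=0}^{k−1} q_j ≡ 0 (mod p). -/
/-! If `f ∈ ℤ[X]` satisfies `f(ζ) = c` for a primitive `pⁿ`-th root of unity `ζ`, `n ≥ 1`,
then the cyclotomic polynomial `Φ_{pⁿ}`, the minimal polynomial of `ζ` over `ℤ`, divides `f - c`.
Evaluating at `1`, where `Φ_{pⁿ}(1) = p`, gives `p ∣ f(1) - c`. For `f = Σ q_j X^j` and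
`c = kˢ` this says `p ∣ Σ q_j - kˢ`, and `p ∣ kˢ` since `s ≥ 1`. -/

open Polynomial

namespace IsPrimitiveRoot

variable {K : Type*} [Field K] [CharZero K] {ζ : K}

theorem cyclotomic_dvd_of_aeval_eq_zero {k : ℕ} (hζ : IsPrimitiveRoot ζ k) (hk : 0 < k)
    {f : ℤ[X]} (hf : aeval ζ f = 0) : cyclotomic k ℤ ∣ f := by
  rw [cyclotomic_eq_minpoly hζ hk]
  exact minpoly.isIntegrallyClosed_dvd (hζ.isIntegral hk) hf

theorem prime_dvd_eval_one_sub_of_aeval_eq_intCast {p n : ℕ} [Fact p.Prime]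
    (hζ : IsPrimitiveRoot ζ (p ^ (n + 1))) {f : ℤ[X]} {c : ℤ} (hf : aeval ζ f = c) :
    (p : ℤ) ∣ f.eval 1 - c := by
  have hdvd : cyclotomic (p ^ (n + 1)) ℤ ∣ f - C c :=
    hζ.cyclotomic_dvd_of_aeval_eq_zero (pow_pos (Fact.out : p.Prime).pos _)
      (by simp [hf])
  simpa using map_dvd (evalRingHom 1) hdvd

end IsPrimitiveRoot

/-- Let `p` be prime, `n ≥ 1`, `k = pⁿ`, `ω = exp(2πi/k)`.
If nonnegative integers `q_0, …, q_{k-1}` and an integer `s ≥ 1` satisfy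
`Σ q_j ω^j = k^s`, then `Σ q_j ≡ 0 (mod p)`. -/
theorem sum_coeff_dvd_of_root_sum_pow (p : ℕ) (hp : p.Prime) (n : ℕ) (hn : 1 ≤ n)
    (k : ℕ) (hk : k = p ^ n)
    (ω : ℂ) (hω : ω = Complex.exp (2 * Real.pi * Complex.I / k))
    (q : Fin k → ℕ) (s : ℕ) (hs : 1 ≤ s)
    (hsum : ∑ j : Fin k, (q j : ℂ) * ω ^ (j : ℕ) = (k : ℂ) ^ s) :
    (∑ j : Fin k, q j) % p = 0 := by
  have : Fact p.Prime := ⟨hp⟩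
  obtain ⟨m, rfl⟩ := Nat.exists_eq_add_of_le' hn
  have hω_prim : IsPrimitiveRoot ω (p ^ (m + 1)) := by
    subst hk hω
    exact Complex.isPrimitiveRoot_exp _ (pow_ne_zero _ hp.ne_zero)
  set f : ℤ[X] := ∑ j : Fin k, C (q j : ℤ) * X ^ (j : ℕ)
  have hf : aeval ω f = ((k ^ s : ℕ) : ℤ) := by
    simpa [f, ← hk] using hsum
  have hp_dvd_pow : (p : ℤ) ∣ ((k ^ s : ℕ) : ℤ) := by
    subst hk
    exact Int.natCast_dvd_natCast.mpr
      ((dvd_pow_self p m.succ_ne_zero).trans (dvd_pow_self _ (Nat.one_le_iff_ne_zero.mp hs)))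
  have hp_dvd_sum : (p : ℤ) ∣ f.eval 1 :=
    (dvd_sub_left hp_dvd_pow).mp (hω_prim.prime_dvd_eval_one_sub_of_aeval_eq_intCast hf)
  simp only [f, eval_finsetSum, eval_mul, eval_C, eval_pow, eval_X, one_pow, mul_one]
    at hp_dvd_sum
  exact Nat.mod_eq_zero_of_dvd (by exact_mod_cast hp_dvd_sum)
end

section
/- Let p be a prime, n ≥ 1, and N = pⁿ + 1, and let A be the adjacency matrix of the complete graph K_N. Then for every t ≥ 1 it is not the case that all entries of A^t are divisible by p; that is, there exist vertices x, y with (A^t)_{x,y} ≢ 0 (mod p). -/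
/-!
Write `J` for the all-ones matrix, so that the adjacency matrix of the complete graph is `J - 1`.
Since `J * J = N • J`, every power `(J - 1) ^ t` has the shape `c • J + (-1) ^ t • 1`. Hence a
diagonal and an off-diagonal entry of `A ^ t` differ by `(-1) ^ t`, and the prime `p` cannot
divide both of them.
-/

open Matrix

namespace Matrix

variable {V R : Type*} [Fintype V] [CommRing R]

theorem of_one_mul_of_one : (of 1 : Matrix V V R) * of 1 = (Fintype.card V : R) • of 1 := by
  ext i j
  simp [mul_apply]

variable [DecidableEq V]

theorem exists_of_one_sub_one_pow_eq (t : ℕ) :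
    ∃ c : R, (of 1 - 1 : Matrix V V R) ^ t = c • of 1 + (-1) ^ t • 1 := by
  induction t with
  | zero => exact ⟨0, by simp⟩
  | succ t ih =>
    obtain ⟨c, hc⟩ := ih
    refine ⟨c * (Fintype.card V - 1) + (-1) ^ t, ?_⟩
    rw [pow_succ, hc, mul_sub, mul_one, add_mul, smul_mul, smul_mul, one_mul, of_one_mul_of_one,
      smul_smul, pow_succ]
    module

end Matrix

namespace SimpleGraph

variable {V R : Type*} [Fintype V] [DecidableEq V] [CommRing R]

theorem adjMatrix_completeGraph_pow_apply_sub {x y : V} (hxy : x ≠ y) (t : ℕ) :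
    ((completeGraph V).adjMatrix R ^ t) x x - ((completeGraph V).adjMatrix R ^ t) x y
      = (-1) ^ t := by
  obtain ⟨c, hc⟩ := exists_of_one_sub_one_pow_eq (R := R) (V := V) t
  rw [adjMatrix_completeGraph_eq_of_one_sub_one, hc]
  simp only [Matrix.add_apply, Matrix.smul_apply, of_apply, Pi.one_apply, one_apply_eq,
    one_apply_ne hxy, smul_eq_mul, mul_one]
  ring

end SimpleGraph

theorem complete_graph_pow_not_all_dvd_general (p : ℕ) (hp : p.Prime) (n : ℕ)
    (N : ℕ) (hN : N = p ^ n + 1)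
    (A : Matrix (Fin N) (Fin N) ℤ)
    (hA : ∀ x y : Fin N, A x y = if x = y then 0 else 1)
    (t : ℕ) :
    ∃ x y : Fin N, ¬ (p : ℤ) ∣ (A ^ t) x y := by
  have hA' : A = (SimpleGraph.completeGraph (Fin N)).adjMatrix ℤ := by
    ext x y
    simp [hA, SimpleGraph.adjMatrix_apply]
  have hN2 : 2 ≤ N := by have := Nat.pow_pos (n := n) hp.pos; omega
  let x : Fin N := ⟨0, by omega⟩
  let y : Fin N := ⟨1, by omega⟩
  have hxy : x ≠ y := by simp [x, y, Fin.ext_iff]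
  by_contra! hdvd
  have h := dvd_sub (hdvd x x) (hdvd x y)
  rw [hA', SimpleGraph.adjMatrix_completeGraph_pow_apply_sub hxy] at h
  exact (Nat.prime_iff_prime_int.mp hp).irreducible.not_dvd_isUnit (isUnit_neg_one.pow t) h

/-- Let `p` be prime, `n ≥ 1`, `N = pⁿ + 1`, and `A` the
adjacency matrix of `K_N`. Then for every `t ≥ 1`, not all entries of `A^t`
are divisible by `p`. -/
theorem complete_graph_pow_not_all_dvd (p : ℕ) (hp : p.Prime) (n : ℕ) (hn : 1 ≤ n)
    (N : ℕ) (hN : N = p ^ n + 1)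
    (A : Matrix (Fin N) (Fin N) ℤ)
    (hA : ∀ x y : Fin N, A x y = if x = y then 0 else 1)
    (t : ℕ) (ht : 1 ≤ t) :
    ∃ x y : Fin N, ¬ (p : ℤ) ∣ (A ^ t) x y :=
  complete_graph_pow_not_all_dvd_general p hp n N hN A hA t
end

section
/- Let N > 2 and let A be the adjacency matrix of the cycle graph C_N^(l) with self-loops, with rows and columns indexed by ℤ/Nℤ. Define a_i^(t) = (A^t)_{i,0} mod 3 ∈ ℤ/3ℤ for i ∈ ℤ/Nℤ. If there exist m ≥ 0 and t ≥ 1 such that a_{i+3^m}^(t) = a_i^(t) for all i ∈ ℤ/Nℤ, then a_{i+3^{m+1}}^(t−1) = a_i^(t−1) for all i ∈ ℤ/Nℤ. -/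
/-!
Modulo 3 the walk recursion `a^(t)_i = a^(t-1)_{i-1} + a^(t-1)_i + a^(t-1)_{i+1}` says that
`a^(t)` is a translate of the second forward difference `Δ² a^(t-1)`, because `1 ≡ -2`.
In characteristic 3 the Frobenius identity `(S - 1)^(3^k) = S^(3^k) - 1` for the shift `S`
gives `Δ^(3^k) = Δ_[3^k]`, so `3^m`-periodicity of `a^(t)` means `Δ^(3^m + 2) a^(t-1) = 0`.
As `3^m + 2 ≤ 3^(m+1)`, also `Δ^(3^(m+1)) a^(t-1) = 0`: `a^(t-1)` is `3^(m+1)`-periodic.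
-/

open Function fwdDiff

section FwdDiff

variable {M G R : Type*} [AddCommMonoid M] [AddCommGroup G] [CommRing R]

theorem fwdDiff_eq_zero_iff_periodic (f : M → G) (h : M) : Δ_[h] f = 0 ↔ Periodic f h := by
  simp [funext_iff, fwdDiff, Periodic, sub_eq_zero]

theorem fwdDiff_iter_eq_zero_of_le {f : M → G} {h : M} {n k : ℕ} (hn : (Δ_[h])^[n] f = 0)
    (hnk : n ≤ k) : (Δ_[h])^[k] f = 0 := by
  obtain ⟨j, rfl⟩ := Nat.exists_eq_add_of_le hnk
  rw [add_comm, iterate_add_apply, hn]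
  exact iterate_fixed (fwdDiff_const h 0) j

theorem fwdDiff_iter_char_pow (p : ℕ) [Fact p.Prime] [CharP R p] (f : M → R) (h : M) (k : ℕ) :
    (Δ_[h])^[p ^ k] f = Δ_[p ^ k • h] f := by
  let S : Module.End R (M → R) := LinearMap.funLeft R R (· + h)
  have hS : ∀ (n : ℕ) (g : M → R), (S ^ n) g = fun y => g (y + n • h) := by
    intro n
    induction n with
    | zero => simp
    | succ n ih => intro g; ext y; simp [pow_succ, ih, S, succ_nsmul, add_assoc]
  have hΔ : ∀ (n : ℕ) (g : M → R), ((S - 1) ^ n) g = (Δ_[h])^[n] g := by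
    intro n
    induction n with
    | zero => simp
    | succ n ih => intro g; rw [pow_succ, Module.End.mul_apply, ih, iterate_succ_apply]; rfl
  have hFrob : (S - 1) ^ p ^ k = S ^ p ^ k - 1 := by
    simpa using
      congrArg (Polynomial.aeval S) (sub_pow_char_pow (Polynomial.X : Polynomial R) 1 k (p := p))
  rw [← hΔ, hFrob]
  ext y
  simp [hS, fwdDiff]

end FwdDiff

section CharThree

variable {G R : Type*} [AddCommGroup G] [CommRing R] [CharP R 3]

theorem fwdDiff_iter_two_eq_neighbourSum (f : G → R) (h i : G) :
    (Δ_[h])^[2] f (i - h) = f (i - h) + f i + f (i + h) := by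
  simp only [iterate_succ, iterate_zero, Function.comp_apply, id, fwdDiff, sub_add_cancel]
  linear_combination (-f i) * CharP.ofNat_eq_zero R 3

theorem Function.Periodic.of_neighbourSum {f : G → R} {h : G} {m : ℕ}
    (hper : Periodic (fun i => f (i - h) + f i + f (i + h)) (3 ^ m • h)) :
    Periodic f (3 ^ (m + 1) • h) := by
  have hΔ2 : Periodic ((Δ_[h])^[2] f) (3 ^ m • h) := fun j => by
    have := hper (j + h)
    dsimp only at this
    rwa [← fwdDiff_iter_two_eq_neighbourSum, ← fwdDiff_iter_two_eq_neighbourSum, add_right_comm,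
      add_sub_cancel_right, add_sub_cancel_right] at this
  rw [← fwdDiff_eq_zero_iff_periodic, ← fwdDiff_iter_char_pow 3, ← iterate_add_apply] at hΔ2
  rw [← fwdDiff_eq_zero_iff_periodic, ← fwdDiff_iter_char_pow 3]
  refine fwdDiff_iter_eq_zero_of_le hΔ2 ?_
  have := Nat.one_le_pow m 3 (by norm_num)
  rw [pow_succ]
  omega

end CharThree

theorem cycleAdj_mul_apply {R α : Type*} [CommRing R] [Fintype R] [DecidableEq R]
    [NonAssocSemiring α] {A B : Matrix R R α}
    (hA : ∀ x y, A x y = if y = x - 1 ∨ y = x ∨ y = x + 1 then 1 else 0)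
    (h2 : (2 : R) ≠ 0) (i j : R) :
    (A * B) i j = B (i - 1) j + B i j + B (i + 1) j := by
  have h1 : (1 : R) ≠ 0 := fun h => h2 (by rw [← one_add_one_eq_two, h, add_zero])
  have hnbrs :
      Finset.univ.filter (fun x => x = i - 1 ∨ x = i ∨ x = i + 1) = {i - 1, i, i + 1} := by
    ext; simp
  simp_rw [Matrix.mul_apply, hA, ite_mul, one_mul, zero_mul]
  rw [← Finset.sum_filter, hnbrs, Finset.sum_insert, Finset.sum_insert, Finset.sum_singleton,
    add_assoc]
  · simpa using h1
  · simp only [Finset.mem_insert, Finset.mem_singleton, not_or]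
    exact ⟨by simpa using h1, fun h => h2 (by linear_combination -h)⟩

/-- Let `N > 2` and `A` be the adjacency matrix of the cycle
graph with self-loops `C_N^(l)`, indexed by `ℤ/Nℤ`. Let
`a_i^(t) = (A^t)_{i,0} mod 3`. If there exist `m ≥ 0` and `t ≥ 1` with
`a_{i+3^m}^(t) = a_i^(t)` for all `i`, then `a_{i+3^{m+1}}^(t−1) = a_i^(t−1)`
for all `i`. -/
theorem cycle_selfloop_period_descend (N : ℕ) [NeZero N] (hN : 2 < N)
    (A : Matrix (ZMod N) (ZMod N) ℤ)
    (hA : ∀ x y : ZMod N,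
      A x y = if y = x - 1 ∨ y = x ∨ y = x + 1 then 1 else 0)
    (a : ℕ → ZMod N → ZMod 3)
    (ha : ∀ t : ℕ, ∀ i : ZMod N, a t i = (((A ^ t) i 0 : ℤ) : ZMod 3))
    (m t : ℕ) (ht : 1 ≤ t)
    (hper : ∀ i : ZMod N, a t (i + (3 : ZMod N) ^ m) = a t i) :
    ∀ i : ZMod N, a (t - 1) (i + (3 : ZMod N) ^ (m + 1)) = a (t - 1) i := by
  obtain ⟨s, rfl⟩ := Nat.exists_eq_add_of_le' ht
  have h2 : (2 : ZMod N) ≠ 0 := fun h => by simpa [h] using ZMod.val_ofNat_of_lt (a := 2) hN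
  have hstep : ∀ i, a (s + 1) i = a s (i - 1) + a s i + a s (i + 1) := fun i => by
    rw [ha, pow_succ', cycleAdj_mul_apply hA h2]
    push_cast
    simp only [ha]
  have hpow : ∀ k, (3 : ZMod N) ^ k = 3 ^ k • (1 : ZMod N) := fun k => by simp
  simp only [hpow, Nat.add_sub_cancel] at hper ⊢
  exact Periodic.of_neighbourSum fun i => by simpa only [hstep] using hper i
end

section
/- Let N > 2 and let A be the adjacency matrix of the cycle graph C_N^(l) with self-loops, with rows and columns indexed by ℤ/Nℤ, and set a_i^(t) = (A^t)_{i,0} mod 3 ∈ ℤ/3ℤ. Suppose m ≥ 1 and t ≥ 1 are such that a_{i+3^m}^(t) = a_i^(t) for all i ∈ ℤ/Nℤ. Then for every i ∈ ℤ/Nℤ, the sum Σ_{j=0}^{3^m−1} (a_{i+1+3j}^(t) − a_{i+3j}^(t)) ≡ 0 (mod 3). -/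
open Matrix Finset

theorem Function.Periodic.sum_range_mul {M : Type*} [AddCommMonoid M] {g : ℕ → M} {n : ℕ}
    (hg : Function.Periodic g n) (k : ℕ) :
    ∑ j ∈ range (k * n), g j = k • ∑ j ∈ range n, g j := by
  induction k with
  | zero => simp
  | succ k ih =>
    have hshift : ∀ j, g (k * n + j) = g j := fun j => by
      rw [add_comm]; exact hg.nat_mul k j
    simp only [Nat.succ_mul, sum_range_add, ih, hshift, succ_nsmul]

/-- `j ↦ f (c + p j)` has period `p ^ k`, so the sum runs `p` times over one period. -/
theorem Function.Periodic.sum_range_pow_succ_comp_mul_eq_zero {R : Type*} [Semiring R] {p k : ℕ}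
    {f : R → ZMod p} (hf : Function.Periodic f (p ^ (k + 1))) (c : R) :
    ∑ j ∈ range (p ^ (k + 1)), f (c + p * j) = 0 := by
  have hg : Function.Periodic (fun j : ℕ => f (c + p * j)) (p ^ k) := fun j => by
    simpa [mul_add, ← pow_succ', add_assoc] using hf (c + p * j)
  rw [pow_succ', hg.sum_range_mul, nsmul_eq_mul, ZMod.natCast_self, zero_mul]

theorem cycle_selfloop_telescoping_sum_general (N : ℕ)
    (a : ℕ → ZMod N → ZMod 3)
    (m t : ℕ)
    (hper : ∀ i : ZMod N, a t (i + (3 : ZMod N) ^ m) = a t i) :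
    ∀ i : ZMod N,
      ∑ j ∈ Finset.range (3 ^ m),
        (a t (i + 1 + 3 * (j : ZMod N)) - a t (i + 3 * (j : ZMod N))) = 0 := by
  intro i
  rcases m with _ | k
  · simpa [sub_eq_zero] using hper i
  · have hsum (c : ZMod N) : ∑ j ∈ range (3 ^ (k + 1)), a t (c + 3 * j) = 0 := by
      have hf : Function.Periodic (a t) ((3 : ℕ) ^ (k + 1)) := by exact_mod_cast hper
      exact_mod_cast hf.sum_range_pow_succ_comp_mul_eq_zero c
    rw [sum_sub_distrib, hsum, hsum, sub_zero]

/-- Let `N > 2` and `A` be the adjacency matrix of the cycle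
graph with self-loops `C_N^(l)`, indexed by `ℤ/Nℤ`, with
`a_i^(t) = (A^t)_{i,0} mod 3`. If `m ≥ 1`, `t ≥ 1` and
`a_{i+3^m}^(t) = a_i^(t)` for all `i`, then for every `i`,
`Σ_{j=0}^{3^m−1} (a_{i+1+3j}^(t) − a_{i+3j}^(t)) ≡ 0 (mod 3)`. -/
theorem cycle_selfloop_telescoping_sum (N : ℕ) [NeZero N] (hN : 2 < N)
    (A : Matrix (ZMod N) (ZMod N) ℤ)
    (hA : ∀ x y : ZMod N,
      A x y = if y = x - 1 ∨ y = x ∨ y = x + 1 then 1 else 0)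
    (a : ℕ → ZMod N → ZMod 3)
    (ha : ∀ t : ℕ, ∀ i : ZMod N, a t i = (((A ^ t) i 0 : ℤ) : ZMod 3))
    (m t : ℕ) (hm : 1 ≤ m) (ht : 1 ≤ t)
    (hper : ∀ i : ZMod N, a t (i + (3 : ZMod N) ^ m) = a t i) :
    ∀ i : ZMod N,
      ∑ j ∈ Finset.range (3 ^ m),
        (a t (i + 1 + 3 * (j : ZMod N)) - a t (i + 3 * (j : ZMod N))) = 0 :=
  cycle_selfloop_telescoping_sum_general N a m t hper
end

section
/- Let N > 2 and let A be the adjacency matrix of the cycle graph C_N^(l) with self-loops, with rows and columns indexed by ℤ/Nℤ. If there exists T ≥ 1 such that (A^T)_{i,0} ≡ 0 (mod 3) for every i ∈ ℤ/Nℤ, then N is a power of 3; equivalently, if N is not a power of 3 then for every T ≥ 1 there exists i ∈ ℤ/Nℤ with (A^T)_{i,0} ≢ 0 (mod 3). -/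
open Matrix

/-!
Reduce modulo 3 and write `S` for the cyclic shift. Then `A = S⁻¹ + 1 + S`, so
`S * A = 1 + S + S² = (S - 1)²` in characteristic 3. Circulant matrices are determined by
their column `0`, so the hypothesis makes `A ^ T` vanish modulo 3; hence `S - 1` is nilpotent
and, by the Frobenius identity `(S - 1) ^ 3 ^ m = S ^ 3 ^ m - 1`, the shift has order dividing
a power of 3. The order of `S` is `N`.
-/

section Circulant

variable {ι α : Type*} [Fintype ι] [DecidableEq ι] [AddGroup ι]

theorem Matrix.circulant_single_mul_circulant_single [NonAssocSemiring α] (a b : ι) (r s : α) :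
    circulant (Pi.single a r) * circulant (Pi.single b s) =
      circulant (Pi.single (a + b) (r * s)) := by
  rw [circulant_mul]
  congr 1
  ext i
  simp [mulVec, dotProduct, circulant_apply, Pi.single_apply, sub_eq_iff_eq_add]

theorem Matrix.exists_circulant_pow [Semiring α] (v : ι → α) (k : ℕ) :
    ∃ w, circulant v ^ k = circulant w := by
  induction k with
  | zero => exact ⟨Pi.single 0 1, (circulant_single_one α ι).symm⟩
  | succ k ih =>
    obtain ⟨w, hw⟩ := ih
    exact ⟨_, by rw [pow_succ, hw, circulant_mul]⟩

theorem Matrix.circulant_pow_eq_zero_of_col_zero [Semiring α] (v : ι → α) (k : ℕ)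
    (h : ∀ i, (circulant v ^ k) i 0 = 0) : circulant v ^ k = 0 := by
  obtain ⟨w, hw⟩ := exists_circulant_pow v k
  rw [hw] at h ⊢
  rw [← circulant_zero, circulant_inj]
  ext i
  simpa [circulant_col_zero_eq] using h i

end Circulant

theorem sub_one_sq_eq_one_add_add_sq {R : Type*} [Ring R] [CharP R 3] (x : R) :
    (x - 1) ^ 2 = 1 + x + x ^ 2 := by
  have h3 : (3 : R) = 0 := by exact_mod_cast CharP.cast_eq_zero R 3
  calc (x - 1) ^ 2 = 1 + x + x ^ 2 - 3 * x := by noncomm_ring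
    _ = 1 + x + x ^ 2 := by rw [h3, zero_mul, sub_zero]

theorem exists_pow_char_pow_eq_one_of_isNilpotent_sub_one {R : Type*} [Ring R] (p : ℕ)
    [hp : Fact p.Prime] [CharP R p] {x : R} (hx : IsNilpotent (x - 1)) :
    ∃ m, x ^ p ^ m = 1 := by
  obtain ⟨k, hk⟩ := hx
  refine ⟨k, ?_⟩
  rw [← sub_eq_zero, ← one_pow (p ^ k), ← sub_pow_char_pow_of_commute p k (Commute.one_right x)]
  exact pow_eq_zero_of_le (Nat.lt_pow_self hp.out.one_lt).le hk

section CycleShift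

def cycleShift (n : ℕ) (R : Type*) [Zero R] [One R] : Matrix (ZMod n) (ZMod n) R :=
  circulant (Pi.single 1 1)

variable {n : ℕ} {R : Type*} [Semiring R]

theorem eq_circulant_of_cycle_adj (hn : 2 < n) {A : Matrix (ZMod n) (ZMod n) R}
    (hA : ∀ x y : ZMod n, A x y = if y = x - 1 ∨ y = x ∨ y = x + 1 then 1 else 0) :
    A = circulant (Pi.single (-1) 1 + Pi.single 0 1 + Pi.single 1 1) := by
  have : Fact (1 < n) := ⟨by omega⟩
  have h1 : (1 : ZMod n) ≠ 0 := one_ne_zero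
  have h2 : (1 : ZMod n) ≠ -1 := by
    rw [Ne, ← sub_eq_zero, sub_neg_eq_add, one_add_one_eq_two, ← Nat.cast_ofNat,
      ZMod.natCast_eq_zero_iff]
    exact fun h => by have := Nat.le_of_dvd two_pos h; omega
  ext x y
  obtain ⟨d, rfl⟩ : ∃ d, y = x - d := ⟨x - y, by abel⟩
  have hneg : x - d = x + 1 ↔ d = -1 := by
    rw [sub_eq_add_neg, add_right_inj, neg_eq_iff_eq_neg]
  simp only [hA, circulant_apply, sub_sub_cancel, Pi.add_apply, Pi.single_apply, sub_right_inj,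
    sub_eq_self, hneg]
  rcases eq_or_ne d 1 with rfl | hd1
  · simp [h1, h2]
  rcases eq_or_ne d 0 with rfl | hd0
  · simp [h1, h1.symm]
  simp [hd1, hd0]

variable [NeZero n]

theorem cycleShift_pow (k : ℕ) :
    cycleShift n R ^ k = circulant (Pi.single (k : ZMod n) 1) := by
  induction k with
  | zero => simp
  | succ k ih =>
    rw [pow_succ, ih, cycleShift, circulant_single_mul_circulant_single, one_mul, Nat.cast_succ]

theorem cycleShift_pow_eq_one_iff [Nontrivial R] (k : ℕ) : cycleShift n R ^ k = 1 ↔ n ∣ k := by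
  rw [cycleShift_pow, ← circulant_single_one, circulant_inj, ← ZMod.natCast_eq_zero_iff]
  refine ⟨fun h => ?_, fun h => by rw [h]⟩
  simpa [Pi.single_apply] using congrFun h k

theorem cycleShift_mul_circulant :
    cycleShift n R * circulant (Pi.single (-1) 1 + Pi.single 0 1 + Pi.single 1 1) =
      1 + cycleShift n R + cycleShift n R ^ 2 := by
  simp only [cycleShift, circulant_add, mul_add, sq, circulant_single_mul_circulant_single,
    mul_one, add_neg_cancel, circulant_single_one]

end CycleShift

theorem cycle_selfloop_pow_dvd_three_general (N : ℕ) [NeZero N] (hN : 2 < N)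
    (A : Matrix (ZMod N) (ZMod N) ℤ)
    (hA : ∀ x y : ZMod N,
      A x y = if y = x - 1 ∨ y = x ∨ y = x + 1 then 1 else 0)
    (T : ℕ)
    (hdvd : ∀ i : ZMod N, (3 : ℤ) ∣ (A ^ T) i 0) :
    ∃ n : ℕ, N = 3 ^ n := by
  have : Fact (Nat.Prime 3) := ⟨Nat.prime_three⟩
  set B := A.map (Int.castRingHom (ZMod 3)) with hBdef
  have hB : B = circulant (Pi.single (-1) 1 + Pi.single 0 1 + Pi.single 1 1) := by
    refine eq_circulant_of_cycle_adj hN fun x y => ?_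
    rw [hBdef, map_apply, hA]
    split_ifs <;> simp
  have hBT : B ^ T = 0 := by
    have hcol : ∀ i, (B ^ T) i 0 = 0 := fun i => by
      rw [hBdef, ← Matrix.map_pow, map_apply, eq_intCast, ZMod.intCast_zmod_eq_zero_iff_dvd]
      exact_mod_cast hdvd i
    rw [hB] at hcol ⊢
    exact circulant_pow_eq_zero_of_col_zero _ T hcol
  have hcomm : Commute (cycleShift N (ZMod 3)) B := by
    rw [hB]
    exact circulant_mul_comm _ _
  have hnil : IsNilpotent (cycleShift N (ZMod 3) - 1) := ⟨2 * T, by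
    rw [pow_mul, sub_one_sq_eq_one_add_add_sq, ← cycleShift_mul_circulant, ← hB, hcomm.mul_pow,
      hBT, mul_zero]⟩
  obtain ⟨m, hm⟩ := exists_pow_char_pow_eq_one_of_isNilpotent_sub_one 3 hnil
  obtain ⟨n, -, rfl⟩ := (Nat.dvd_prime_pow Nat.prime_three).1 ((cycleShift_pow_eq_one_iff _).1 hm)
  exact ⟨n, rfl⟩

/-- Let `N > 2` and `A` be the adjacency matrix of the cycle
graph with self-loops `C_N^(l)`, indexed by `ℤ/Nℤ`. If there exists `T ≥ 1`
with `(A^T)_{i,0} ≡ 0 (mod 3)` for every `i`, then `N` is a power of `3`. -/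
theorem cycle_selfloop_pow_dvd_three (N : ℕ) [NeZero N] (hN : 2 < N)
    (A : Matrix (ZMod N) (ZMod N) ℤ)
    (hA : ∀ x y : ZMod N,
      A x y = if y = x - 1 ∨ y = x ∨ y = x + 1 then 1 else 0)
    (T : ℕ) (hT : 1 ≤ T)
    (hdvd : ∀ i : ZMod N, (3 : ℤ) ∣ (A ^ T) i 0) :
    ∃ n : ℕ, N = 3 ^ n :=
  cycle_selfloop_pow_dvd_three_general N hN A hA T hdvd
end

section
/- Let p be an odd prime, n ≥ 1, and d = pⁿ, and let A be the adjacency matrix of the hypercube Q_d. Then for every T ≥ 1 it is not the case that all entries of A^T are divisible by d; that is, there exist vertices x, y ∈ {0,1}^d with (A^T)_{x,y} ≢ 0 (mod d). -/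
/-!
Fix a coordinate `i₀`. The sign vector `x ↦ (-1) ^ x i₀` is an eigenvector of the adjacency
matrix of `Q_d` with eigenvalue `d - 2`: flipping `i₀` changes the sign, flipping any of the other
`d - 1` coordinates does not. Hence `A ^ T` maps it to `(d - 2) ^ T` times itself, and if `d`
divided every entry of `A ^ T`, reading off the entry at the origin would give `d ∣ (d - 2) ^ T`.
An odd prime `p ∣ d` would then divide `d - 2`, hence `2`.
-/

open Matrix Finset

theorem Matrix.pow_mulVec_of_mulVec_eq_smul {m R : Type*} [Fintype m] [DecidableEq m]
    [CommRing R] {M : Matrix m m R} {v : m → R} {c : R} (hv : M *ᵥ v = c • v) (T : ℕ) :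
    (M ^ T) *ᵥ v = c ^ T • v := by
  induction T with
  | zero => simp
  | succ T ih => rw [pow_succ, ← mulVec_mulVec, hv, mulVec_smul, ih, smul_smul, pow_succ']

theorem Matrix.dvd_mulVec_apply {m R : Type*} [Fintype m] [CommRing R] {M : Matrix m m R}
    {a : R} (hM : ∀ x y, a ∣ M x y) (v : m → R) (x : m) : a ∣ (M *ᵥ v) x :=
  Finset.dvd_sum fun y _ => (hM x y).mul_right _

theorem Int.not_dvd_sub_two_pow {p d : ℤ} (hp : Prime p) (hp2 : ¬ p ∣ 2) (hpd : p ∣ d)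
    (T : ℕ) : ¬ d ∣ (d - 2) ^ T := fun h =>
  hp2 <| by simpa using dvd_sub hpd (hp.dvd_of_dvd_pow (hpd.trans h))

namespace Hypercube

variable {ι : Type*} [DecidableEq ι]

variable (ι) in
def adjMatrix [Fintype ι] : Matrix (ι → Fin 2) (ι → Fin 2) ℤ :=
  Matrix.of fun x y => if hammingDist x y = 1 then 1 else 0

def flip (x : ι → Fin 2) (i : ι) : ι → Fin 2 :=
  Function.update x i (x i + 1)

theorem flip_eq_iff {x y : ι → Fin 2} {i : ι} :
    y = flip x i ↔ ∀ k, x k ≠ y k ↔ k = i := by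
  have key : ∀ a b : Fin 2, (a ≠ b ↔ b = a + 1) := by decide
  simp only [funext_iff, flip, Function.update_apply]
  refine forall_congr' fun k => ?_
  split_ifs with hk
  · simp [hk, key]
  · simp [hk, eq_comm]

theorem hammingDist_eq_one_iff [Fintype ι] {x y : ι → Fin 2} :
    hammingDist x y = 1 ↔ ∃ i, y = flip x i := by
  simp only [hammingDist, card_eq_one, Finset.ext_iff, mem_filter, mem_univ, true_and,
    mem_singleton, flip_eq_iff]

theorem flip_injective (x : ι → Fin 2) : Function.Injective (flip x) := fun i _ h =>
  (flip_eq_iff.mp h i).mp ((flip_eq_iff.mp rfl i).mpr rfl)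

theorem adjMatrix_mulVec_apply [Fintype ι] (f : (ι → Fin 2) → ℤ) (x : ι → Fin 2) :
    (adjMatrix ι *ᵥ f) x = ∑ i, f (flip x i) := by
  have neighbours : univ.filter (fun y => hammingDist x y = 1) = univ.image (flip x) := by
    ext y
    simp only [mem_filter, mem_univ, true_and, mem_image, hammingDist_eq_one_iff]
    exact exists_congr fun i => eq_comm
  simp only [mulVec, dotProduct, adjMatrix, of_apply, ite_mul, one_mul, zero_mul]
  rw [← Finset.sum_filter, neighbours, sum_image fun i _ j _ h => flip_injective x h]

def coordSign (i₀ : ι) (x : ι → Fin 2) : ℤ := (-1) ^ (x i₀ : ℕ)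

theorem coordSign_flip (i₀ : ι) (x : ι → Fin 2) (i : ι) :
    coordSign i₀ (flip x i) = if i = i₀ then -coordSign i₀ x else coordSign i₀ x := by
  have key : ∀ a : Fin 2, (-1 : ℤ) ^ ((a + 1 : Fin 2) : ℕ) = -(-1) ^ (a : ℕ) := by decide
  split_ifs with h
  · subst h; simp [coordSign, flip, key]
  · simp [coordSign, flip, Function.update_of_ne (Ne.symm h)]

theorem adjMatrix_mulVec_coordSign [Fintype ι] (i₀ : ι) :
    adjMatrix ι *ᵥ coordSign i₀ = ((Fintype.card ι : ℤ) - 2) • coordSign i₀ := by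
  ext x
  rw [adjMatrix_mulVec_apply, ← Finset.add_sum_erase _ _ (mem_univ i₀)]
  simp only [coordSign_flip, ↓reduceIte, sum_ite_of_false fun i hi => ne_of_mem_erase hi,
    sum_const, mem_univ, card_erase_of_mem, card_univ, Int.nsmul_eq_mul, Pi.smul_apply,
    Int.zsmul_eq_mul]
  rw [Nat.cast_sub (Fintype.card_pos_iff.mpr ⟨i₀⟩)]
  ring

end Hypercube

theorem hypercube_pow_not_all_dvd_general (p : ℕ) (hp : p.Prime) (hodd : p ≠ 2)
    (n : ℕ) (hn : 1 ≤ n) (d : ℕ) (hd : d = p ^ n)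
    (A : Matrix (Fin d → Fin 2) (Fin d → Fin 2) ℤ)
    (hA : ∀ x y : Fin d → Fin 2,
      A x y = if (Finset.univ.filter fun i => x i ≠ y i).card = 1 then 1 else 0)
    (T : ℕ) :
    ∃ x y : Fin d → Fin 2, ¬ (d : ℤ) ∣ (A ^ T) x y := by
  obtain rfl : A = Hypercube.adjMatrix (Fin d) := Matrix.ext hA
  have i₀ : Fin d := ⟨0, hd ▸ pow_pos hp.pos n⟩
  by_contra! hdvd
  have h := dvd_mulVec_apply hdvd (Hypercube.coordSign i₀) 0
  rw [pow_mulVec_of_mulVec_eq_smul (Hypercube.adjMatrix_mulVec_coordSign i₀)] at h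
  have hp2 : ¬ (p : ℤ) ∣ 2 :=
    mod_cast fun h2 => hodd ((Nat.prime_dvd_prime_iff_eq hp Nat.prime_two).mp h2)
  have hpd : (p : ℤ) ∣ d := hd ▸ mod_cast dvd_pow_self p (by omega)
  exact Int.not_dvd_sub_two_pow (Nat.prime_iff_prime_int.mp hp) hp2 hpd T
    (by simpa [Hypercube.coordSign] using h)

/-- For `p` an odd prime, `n ≥ 1`, `d = pⁿ`, and `A` the
adjacency matrix of the hypercube `Q_d`, for every `T ≥ 1` not all entries of
`A^T` are divisible by `d`. -/
theorem hypercube_pow_not_all_dvd (p : ℕ) (hp : p.Prime) (hodd : p ≠ 2)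
    (n : ℕ) (hn : 1 ≤ n) (d : ℕ) (hd : d = p ^ n)
    (A : Matrix (Fin d → Fin 2) (Fin d → Fin 2) ℤ)
    (hA : ∀ x y : Fin d → Fin 2,
      A x y = if (Finset.univ.filter fun i => x i ≠ y i).card = 1 then 1 else 0)
    (T : ℕ) (hT : 1 ≤ T) :
    ∃ x y : Fin d → Fin 2, ¬ (d : ℤ) ∣ (A ^ T) x y :=
  hypercube_pow_not_all_dvd_general p hp hodd n hn d hd A hA T
end
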